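/- arXiv:1710.06743 — 8 statements merged into one kernel-verified Lean document; each statement's English description precedes it below -/
import Mathlib

section
/- Let X be a compact metric space and let 𝒦(X) denote the set of nonempty compact subsets of X equipped with the Hausdorff distance. Let Y be a compact metric space and let Z : Y → 𝒦(X) be a map that is upper semi-continuous at every point of Y. Then the set of points of Y at which Z is continuous (with respect to the Hausdorff distance on 𝒦(X)) is residual in Y, and hence dense. -/
open TopologicalSpace Metric Set

/-- Continuity points of a lower semicontinuous real function are residual. -/
lemma lsc_continuousAt_residual {Y : Type*} [TopologicalSpace Y]
    {f : Y → ℝ} (hf : LowerSemicontinuous f) :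
    {y : Y | ContinuousAt f y} ∈ residual Y := by
  have hE : ∀ p : ℚ, ({y : Y | f y ≤ (p : ℝ)} ∩ closure {y : Y | (p : ℝ) < f y})ᶜ ∈ residual Y := by
    intro p
    have hopen : IsOpen {y : Y | (p : ℝ) < f y} := hf.isOpen_preimage _
    have hcl : IsClosed ({y : Y | f y ≤ (p : ℝ)} ∩ closure {y : Y | (p : ℝ) < f y}) := by
      have : IsClosed {y : Y | f y ≤ (p : ℝ)} := by
        have := hf.isOpen_preimage (p : ℝ)
        rw [← isOpen_compl_iff]
        convert this using 1
        ext y; simp [not_le]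
      exact this.inter isClosed_closure
    have hint : interior ({y : Y | f y ≤ (p : ℝ)} ∩ closure {y : Y | (p : ℝ) < f y}) = ∅ := by
      by_contra h
      obtain ⟨u, hu⟩ := Set.nonempty_iff_ne_empty.2 h
      have hu' : u ∈ closure {y : Y | (p : ℝ) < f y} :=
        (interior_subset hu).2
      obtain ⟨v, hv1, hv2⟩ := mem_closure_iff.1 hu' _ isOpen_interior hu
      have h1 := (interior_subset hv1).1
      simp only [Set.mem_setOf_eq] at h1 hv2
      linarith
    apply residual_of_dense_open hcl.isOpen_compl
    rwa [← interior_eq_empty_iff_dense_compl]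
  have hmem : (⋂ p : ℚ, ({y : Y | f y ≤ (p : ℝ)} ∩ closure {y : Y | (p : ℝ) < f y})ᶜ) ∈
      residual Y := countable_iInter_mem.2 hE
  refine Filter.mem_of_superset hmem ?_
  intro y hy
  simp only [Set.mem_iInter, Set.mem_compl_iff, Set.mem_inter_iff, not_and] at hy
  rw [Set.mem_setOf_eq, continuousAt_iff_lower_upperSemicontinuousAt]
  refine ⟨hf y, ?_⟩
  intro c hc
  obtain ⟨p, hp1, hp2⟩ := exists_rat_btwn hc
  have hnc : y ∉ closure {y : Y | (p : ℝ) < f y} := hy p (le_of_lt hp1)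
  have : ∀ᶠ z in nhds y, z ∈ (closure {y : Y | (p : ℝ) < f y})ᶜ :=
    isClosed_closure.isOpen_compl.mem_nhds hnc
  filter_upwards [this] with z hz
  have : ¬ ((p : ℝ) < f z) := fun h => hz (subset_closure h)
  linarith [not_lt.1 this]

/-- **Semi-continuity Lemma.** If `X` is a compact metric space, `Y` a compact metric space,
and `Z : Y → 𝒦(X)` (nonempty compact subsets of `X` with the Hausdorff distance) is
upper semi-continuous at every point, then the set of continuity points of `Z` is
residual in `Y`, hence dense. -/
theorem semicontinuity_lemma
    {X : Type*} [MetricSpace X] [CompactSpace X]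
    {Y : Type*} [MetricSpace Y] [CompactSpace Y]
    (Z : Y → NonemptyCompacts X)
    (husc : ∀ y₀ : Y, ∀ V : Set X, IsOpen V → (Z y₀ : Set X) ⊆ V →
      ∃ δ > 0, ∀ y : Y, dist y y₀ < δ → (Z y : Set X) ⊆ V) :
    {y : Y | ContinuousAt Z y} ∈ residual Y ∧ Dense {y : Y | ContinuousAt Z y} := by
  -- the functions y ↦ infDist x (Z y) are lower semicontinuous
  have hlsc : ∀ x : X, LowerSemicontinuous (fun y => infDist x (Z y : Set X)) := by
    intro x y₀ c hc
    obtain ⟨r, hr1, hr2⟩ := exists_between hc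
    have hV : IsOpen {z : X | r < dist x z} :=
      isOpen_lt continuous_const (continuous_const.dist continuous_id)
    have hsub : (Z y₀ : Set X) ⊆ {z : X | r < dist x z} := by
      intro z hz
      exact lt_of_lt_of_le hr2 (infDist_le_dist_of_mem hz)
    obtain ⟨δ, hδ, hδ'⟩ := husc y₀ _ hV hsub
    have : ∀ᶠ y in nhds y₀, dist y y₀ < δ := by
      filter_upwards [Metric.ball_mem_nhds y₀ hδ] with y hy using hy
    filter_upwards [this] with y hy
    have hZy := hδ' y hy
    calc c < r := hr1
      _ ≤ infDist x (Z y : Set X) := by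
          rw [infDist_eq_iInf]
          have : Nonempty (Z y : Set X) := (Z y).nonempty.to_subtype
          exact le_ciInf fun z => le_of_lt (hZy z.2)
  obtain ⟨s, hs_count, hs_dense⟩ := exists_countable_dense X
  set R : Set Y := ⋂ x ∈ s, {y : Y | ContinuousAt (fun y => infDist x (Z y : Set X)) y} with hR
  have hRres : R ∈ residual Y :=
    (countable_bInter_mem hs_count).2 fun x _ => lsc_continuousAt_residual (hlsc x)
  have hmain : R ⊆ {y : Y | ContinuousAt Z y} := by
    intro y₀ hy₀
    simp only [hR, Set.mem_iInter] at hy₀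
    rw [Set.mem_setOf_eq, Metric.continuousAt_iff]
    intro ε hε
    -- upper semicontinuity part
    have hthick : IsOpen (thickening (ε/2) (Z y₀ : Set X)) := isOpen_thickening
    obtain ⟨δ₁, hδ₁, hδ₁'⟩ := husc y₀ _ hthick
      (self_subset_thickening (by linarith) _)
    -- covering part
    have hcov : (Z y₀ : Set X) ⊆ ⋃ x ∈ s, ball x (ε/8) := by
      intro z hz
      obtain ⟨x, hxs, hx⟩ := hs_dense.exists_dist_lt z (by linarith : (0:ℝ) < ε/8)
      exact Set.mem_biUnion hxs (by rwa [mem_ball])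
    obtain ⟨t, hts, htfin, htcov⟩ :=
      (Z y₀).isCompact.elim_finite_subcover_image (fun x _ => isOpen_ball) hcov
    -- continuity of the infDist functions at y₀ gives a δ for each x ∈ t
    have hδx : ∀ x ∈ t, ∃ δ > 0, ∀ y : Y, dist y y₀ < δ →
        |infDist x (Z y : Set X) - infDist x (Z y₀ : Set X)| < ε/8 := by
      intro x hxt
      have hc := hy₀ x (hts hxt)
      simp only [Set.mem_setOf_eq] at hc
      rw [Metric.continuousAt_iff] at hc
      obtain ⟨δ, hδ, hδ'⟩ := hc (ε/8) (by linarith)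
      exact ⟨δ, hδ, fun y hy => by simpa [Real.dist_eq] using hδ' hy⟩
    choose! δf hδf hδf' using hδx
    -- combine into a single δ₂
    have htne : t.Nonempty := by
      obtain ⟨z, hz⟩ := (Z y₀).nonempty
      obtain ⟨x, hx, _⟩ := Set.mem_iUnion₂.1 (htcov hz)
      exact ⟨x, hx⟩
    haveI := htfin.fintype
    obtain ⟨tF, htF⟩ : ∃ tF : Finset X, ↑tF = t := ⟨htfin.toFinset, htfin.coe_toFinset⟩
    have htFne : tF.Nonempty := by
      obtain ⟨x, hx⟩ := htne
      exact ⟨x, by rwa [← Finset.mem_coe, htF]⟩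
    set δ₂ := tF.inf' htFne δf with hδ₂def
    have hδ₂pos : 0 < δ₂ :=
      (Finset.lt_inf'_iff htFne).2 fun x hx => hδf x (by rwa [← Finset.mem_coe, htF] at hx)
    refine ⟨min δ₁ δ₂, lt_min hδ₁ hδ₂pos, ?_⟩
    intro y hy
    rw [NonemptyCompacts.dist_eq]
    have h1 : ∀ z ∈ (Z y : Set X), infDist z (Z y₀ : Set X) ≤ ε/2 := by
      intro z hz
      have := hδ₁' y (lt_of_lt_of_le hy (min_le_left _ _)) hz
      obtain ⟨w, hw, hw'⟩ := mem_thickening_iff.1 this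
      exact le_of_lt (lt_of_le_of_lt (infDist_le_dist_of_mem hw) hw')
    have h2 : ∀ z ∈ (Z y₀ : Set X), infDist z (Z y : Set X) ≤ ε/2 := by
      intro z hz
      obtain ⟨x, hxt, hxz⟩ := Set.mem_iUnion₂.1 (htcov hz)
      have hxz' : dist z x < ε/8 := by rwa [mem_ball] at hxz
      have hfx0 : infDist x (Z y₀ : Set X) < ε/8 := by
        calc infDist x (Z y₀ : Set X) ≤ dist x z := infDist_le_dist_of_mem hz
          _ < ε/8 := by rwa [dist_comm]
      have hyδ : dist y y₀ < δf x := by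
        have : δ₂ ≤ δf x := Finset.inf'_le _ (by rwa [← Finset.mem_coe, htF])
        calc dist y y₀ < min δ₁ δ₂ := hy
          _ ≤ δ₂ := min_le_right _ _
          _ ≤ δf x := this
      have habs := hδf' x hxt y hyδ
      have hfx : infDist x (Z y : Set X) < ε/4 := by
        have := abs_lt.1 habs
        linarith [this.1, this.2]
      calc infDist z (Z y : Set X) ≤ infDist x (Z y : Set X) + dist z x :=
            infDist_le_infDist_add_dist
        _ ≤ ε/4 + ε/8 := add_le_add (le_of_lt hfx) (le_of_lt hxz')
        _ ≤ ε/2 := by linarith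
    calc hausdorffDist (Z y : Set X) (Z y₀ : Set X) ≤ ε/2 :=
          hausdorffDist_le_of_infDist (by linarith) h1 h2
      _ < ε := by linarith
  exact ⟨Filter.mem_of_superset hRres hmain,
    dense_of_mem_residual (Filter.mem_of_superset hRres hmain)⟩
end

section
/- Let M be a Hausdorff smooth manifold, let X and Y be continuous vector fields on M, and let F ⊆ M be a compact subset. For each c ∈ ℝ set Z(c) = { x ∈ F : X(x) = c · Y(x) }. Then the set of parameters c ∈ ℝ at which Z is continuous — meaning that Z is both upper semi-continuous and lower semi-continuous at c — is a residual subset of ℝ. -/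
open Set Filter

/-!
The graph `G = {(c, x) | x ∈ F, X x = c • Y x}` is closed in `ℝ × M` (read `X` and `Y` in a local
trivialisation) and lies over the compact set `F`, so by the tube lemma `{c | Z c ∩ K ≠ ∅}` is
closed for every compact `K`. With `K = F \ V` this gives upper semicontinuity at every `c`.
Since `F` is compact and locally embeds into the model space, it carries a countable family `𝒦`
of compact sets such that every neighbourhood of a point of `F` contains a member of `𝒦` through
that point. Off the frontiers of the countably many closed sets `{c | Z c ∩ K ≠ ∅}`, `K ∈ 𝒦`,
which form a meagre set, `Z` is lower semicontinuous.
-/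

open Topology TopologicalSpace Bundle

section CompactNetwork

variable {M : Type*} [TopologicalSpace M]

def IsCompactNetworkOn (𝒦 : Set (Set M)) (s : Set M) : Prop :=
  (∀ K ∈ 𝒦, IsCompact K) ∧ ∀ x ∈ s, ∀ V, IsOpen V → x ∈ V → ∃ K ∈ 𝒦, x ∈ K ∧ K ⊆ V

theorem IsCompactNetworkOn.mono {𝒦 : Set (Set M)} {s t : Set M} (h : IsCompactNetworkOn 𝒦 t)
    (hst : s ⊆ t) : IsCompactNetworkOn 𝒦 s :=
  ⟨h.1, fun x hx => h.2 x (hst hx)⟩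

theorem IsCompactNetworkOn.union {𝒦 𝒦' : Set (Set M)} {s t : Set M}
    (h : IsCompactNetworkOn 𝒦 s) (h' : IsCompactNetworkOn 𝒦' t) :
    IsCompactNetworkOn (𝒦 ∪ 𝒦') (s ∪ t) := by
  refine ⟨fun K hK => hK.elim (h.1 K) (h'.1 K), ?_⟩
  rintro x (hx | hx) V hV hxV
  · obtain ⟨K, hK, hKx⟩ := h.2 x hx V hV hxV
    exact ⟨K, Or.inl hK, hKx⟩
  · obtain ⟨K, hK, hKx⟩ := h'.2 x hx V hV hxV
    exact ⟨K, Or.inr hK, hKx⟩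

theorem IsCompact.exists_countable_isCompactNetworkOn_of_forall_nhdsWithin {F : Set M}
    (hF : IsCompact F)
    (hloc : ∀ x ∈ F, ∃ t ∈ 𝓝[F] x, ∃ 𝒦 : Set (Set M), 𝒦.Countable ∧ IsCompactNetworkOn 𝒦 t) :
    ∃ 𝒦 : Set (Set M), 𝒦.Countable ∧ IsCompactNetworkOn 𝒦 F :=
  hF.induction_on ⟨∅, countable_empty, fun _ h => h.elim, fun _ h => h.elim⟩
    (fun _ _ hst ⟨𝒦, h𝒦, hnet⟩ => ⟨𝒦, h𝒦, hnet.mono hst⟩)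
    (fun _ _ ⟨𝒦, h𝒦, hnet⟩ ⟨𝒦', h𝒦', hnet'⟩ => ⟨𝒦 ∪ 𝒦', h𝒦.union h𝒦', hnet.union hnet'⟩) hloc

theorem IsCompact.exists_countable_isCompactNetworkOn_of_secondCountable [T2Space M] {L : Set M}
    (hL : IsCompact L) [SecondCountableTopology L] :
    ∃ 𝒦 : Set (Set M), 𝒦.Countable ∧ IsCompactNetworkOn 𝒦 L := by
  have : CompactSpace L := isCompact_iff_compactSpace.1 hL
  refine ⟨(fun b => Subtype.val '' closure b) '' countableBasis L,
    (countable_countableBasis L).image _, ?_, ?_⟩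
  · rintro _ ⟨b, -, rfl⟩
    exact isClosed_closure.isCompact.image continuous_subtype_val
  · intro x hx V hV hxV
    obtain ⟨b, hb, hxb, hbV⟩ := (isBasis_countableBasis L).exists_closure_subset
      ((hV.preimage continuous_subtype_val).mem_nhds (x := ⟨x, hx⟩) hxV)
    exact ⟨_, mem_image_of_mem _ hb, ⟨_, subset_closure hxb, rfl⟩, image_subset_iff.2 hbV⟩

theorem IsCompact.secondCountableTopology_of_injOn {X : Type*} [MetricSpace X] {L : Set M}
    (hL : IsCompact L) {f : M → X} (hf : ContinuousOn f L) (hinj : InjOn f L) :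
    SecondCountableTopology L := by
  have : CompactSpace L := isCompact_iff_compactSpace.1 hL
  have := (hf.domRestrict.isClosedEmbedding hinj.injective).isEmbedding.metrizableSpace
  let := metrizableSpaceMetric L
  infer_instance

theorem IsCompact.exists_isCompact_mem_nhdsWithin_subset [T2Space M] {F U : Set M}
    (hF : IsCompact F) (hU : IsOpen U) {x : M} (hxU : x ∈ U) :
    ∃ L ∈ 𝓝[F] x, IsCompact L ∧ L ⊆ U := by
  obtain ⟨V₁, V₂, hV₁, hV₂, hFV₁, hxV₂, hdisj⟩ :=
    (hF.diff hU).separation_of_notMem fun h : x ∈ F \ U => h.2 hxU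
  refine ⟨F \ V₁, mem_nhdsWithin.2 ⟨V₂, hV₂, hxV₂, fun y hy =>
    ⟨hy.2, hdisj.notMem_of_mem_right hy.1⟩⟩, hF.diff hV₁, fun y hy => ?_⟩
  by_contra hyU
  exact hy.2 (hFV₁ ⟨hy.1, hyU⟩)

theorem IsCompact.exists_countable_isCompactNetworkOn {E H : Type*} [NormedAddCommGroup E]
    [NormedSpace ℝ E] [TopologicalSpace H] (I : ModelWithCorners ℝ E H) [ChartedSpace H M]
    [T2Space M] {F : Set M} (hF : IsCompact F) :
    ∃ 𝒦 : Set (Set M), 𝒦.Countable ∧ IsCompactNetworkOn 𝒦 F := by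
  refine hF.exists_countable_isCompactNetworkOn_of_forall_nhdsWithin fun x _ => ?_
  obtain ⟨L, hLx, hL, hLU⟩ :=
    hF.exists_isCompact_mem_nhdsWithin_subset (chartAt H x).open_source (mem_chart_source H x)
  rw [← extChartAt_source I] at hLU
  have := hL.secondCountableTopology_of_injOn ((continuousOn_extChartAt x).mono hLU)
    ((extChartAt I x).injOn.mono hLU)
  exact ⟨L, hLx, hL.exists_countable_isCompactNetworkOn_of_secondCountable⟩

end CompactNetwork

section ClosedRelation

variable {T M : Type*} [TopologicalSpace T] [TopologicalSpace M] {G : Set (T × M)}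

theorem isOpen_setOf_forall_notMem_of_isClosed_of_isCompact (hG : IsClosed G) {K : Set M}
    (hK : IsCompact K) : IsOpen {c | ∀ y ∈ K, (c, y) ∉ G} :=
  isOpen_iff_eventually.2 fun _ hc =>
    hK.eventually_forall_of_forall_eventually fun y hy =>
      hG.isOpen_compl.mem_nhds (hc y hy)

theorem eventually_preimage_prodMk_subset (hG : IsClosed G) {F : Set M} (hF : IsCompact F)
    (hGF : G ⊆ univ ×ˢ F) {c₀ : T} {V : Set M} (hV : IsOpen V) (hsub : Prod.mk c₀ ⁻¹' G ⊆ V) :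
    ∀ᶠ c in 𝓝 c₀, Prod.mk c ⁻¹' G ⊆ V := by
  have hc₀ : ∀ y ∈ F \ V, (c₀, y) ∉ G := fun y hy hyG => hy.2 (hsub hyG)
  filter_upwards [(isOpen_setOf_forall_notMem_of_isClosed_of_isCompact hG (hF.diff hV)).mem_nhds
    hc₀] with c hc y hyG
  by_contra hyV
  exact hc y ⟨(hGF hyG).2, hyV⟩ hyG

theorem residual_lowerSemicontinuous_preimage_prodMk (hG : IsClosed G) {F : Set M}
    (hGF : G ⊆ univ ×ˢ F) {𝒦 : Set (Set M)} (h𝒦 : 𝒦.Countable) (hnet : IsCompactNetworkOn 𝒦 F) :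
    ∀ᶠ c₀ in residual T, ∀ V, IsOpen V → (Prod.mk c₀ ⁻¹' G ∩ V).Nonempty →
      ∀ᶠ c in 𝓝 c₀, (Prod.mk c ⁻¹' G ∩ V).Nonempty := by
  set S : Set M → Set T := fun K => {c | ∃ y ∈ K, (c, y) ∈ G}
  have hS : ∀ K ∈ 𝒦, IsClosed (S K) := fun K hK => by
    simpa [S, compl_ofPred] using
      (isOpen_setOf_forall_notMem_of_isClosed_of_isCompact hG (hnet.1 K hK)).isClosed_compl
  have hres : ∀ᶠ c in residual T, ∀ K ∈ 𝒦, c ∉ frontier (S K) :=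
    (eventually_countable_ball h𝒦).2 fun K hK => residual_of_dense_open
      isClosed_frontier.isOpen_compl
      (interior_eq_empty_iff_dense_compl.1 (interior_frontier (hS K hK)))
  filter_upwards [hres] with c₀ hc₀ V hV ⟨x, hxG, hxV⟩
  obtain ⟨K, hK, hxK, hKV⟩ := hnet.2 x (hGF hxG).2 V hV hxV
  have hint : c₀ ∈ interior (S K) := by
    by_contra h
    exact hc₀ K hK ⟨subset_closure ⟨x, hxK, hxG⟩, h⟩
  filter_upwards [mem_interior_iff_mem_nhds.1 hint] with c ⟨y, hyK, hyG⟩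
  exact ⟨y, hyG, hKV hyK⟩

end ClosedRelation

theorem isClosed_setOf_eq_smul {B F : Type*} [TopologicalSpace B] [NormedAddCommGroup F]
    [NormedSpace ℝ F] {V : B → Type*} [∀ x, AddCommMonoid (V x)] [∀ x, Module ℝ (V x)]
    [∀ x, TopologicalSpace (V x)] [TopologicalSpace (TotalSpace F V)] [FiberBundle F V]
    [VectorBundle ℝ F V] {X Y : ∀ x, V x} (hX : Continuous fun x => TotalSpace.mk' F x (X x))
    (hY : Continuous fun x => TotalSpace.mk' F x (Y x)) :
    IsClosed {p : ℝ × B | X p.2 = p.1 • Y p.2} := by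
  refine isOpen_compl_iff.1 (isOpen_iff_eventually.2 fun ⟨c₀, x₀⟩ hne => ?_)
  set e := trivializationAt F V x₀
  have he : ∀ x (hx : x ∈ e.baseSet) (c : ℝ), X x = c • Y x ↔
      (e ⟨x, X x⟩).2 - c • (e ⟨x, Y x⟩).2 = 0 := fun x hx c => by
    simp only [sub_eq_zero, ← e.linearEquivAt_apply (R := ℝ) x hx, ← map_smul,
      (e.linearEquivAt ℝ x hx).injective.eq_iff]
  have hcoord : ∀ {Z : ∀ x, V x}, Continuous (fun x => TotalSpace.mk' F x (Z x)) →
      ContinuousAt (fun p : ℝ × B => (e ⟨p.2, Z p.2⟩).2) (c₀, x₀) := fun {Z} hZ =>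
    ContinuousAt.comp (g := fun x => (e ⟨x, Z x⟩).2)
      ((FiberBundle.continuousAt_section F x₀).1 hZ.continuousAt) continuousAt_snd
  have hx₀ : x₀ ∈ e.baseSet := FiberBundle.mem_baseSet_trivializationAt' x₀
  filter_upwards [continuousAt_snd.preimage_mem_nhds (e.open_baseSet.mem_nhds hx₀),
    ((hcoord hX).sub (continuousAt_fst.smul (hcoord hY))).eventually_ne
      (mt (he x₀ hx₀ c₀).2 hne)] with p hp hpne using mt (he p.2 hp p.1).1 hpne

theorem exists_pos_forall_abs_sub_lt_of_eventually_nhds {p : ℝ → Prop} {c₀ : ℝ}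
    (h : ∀ᶠ c in 𝓝 c₀, p c) : ∃ δ > 0, ∀ c : ℝ, |c - c₀| < δ → p c := by
  obtain ⟨δ, hδ, h⟩ := Metric.eventually_nhds_iff.1 h
  exact ⟨δ, hδ, fun c hc => h (by rwa [Real.dist_eq])⟩

/-- For continuous vector fields `X, Y` on a Hausdorff smooth manifold `M` and a compact
set `F ⊆ M`, the set of parameters `c₀ ∈ ℝ` at which the set-valued map
`c ↦ {x ∈ F | X x = c • Y x}` is continuous (i.e. both upper and lower semi-continuous)
is residual in `ℝ`. -/
theorem collinearity_locus_continuity_points_residual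
    {E : Type*} [NormedAddCommGroup E] [NormedSpace ℝ E]
    {H : Type*} [TopologicalSpace H] (I : ModelWithCorners ℝ E H)
    {M : Type*} [TopologicalSpace M] [ChartedSpace H M] [IsManifold I (⊤ : ℕ∞) M]
    [T2Space M]
    (X Y : ∀ x : M, TangentSpace I x)
    (hX : Continuous fun x : M => (⟨x, X x⟩ : TangentBundle I M))
    (hY : Continuous fun x : M => (⟨x, Y x⟩ : TangentBundle I M))
    (F : Set M) (hF : IsCompact F) :
    {c₀ : ℝ |
      (∀ V : Set M, IsOpen V → {x | x ∈ F ∧ X x = c₀ • Y x} ⊆ V →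
        ∃ δ > 0, ∀ c : ℝ, |c - c₀| < δ → {x | x ∈ F ∧ X x = c • Y x} ⊆ V) ∧
      (∀ V : Set M, IsOpen V → (V ∩ {x | x ∈ F ∧ X x = c₀ • Y x}).Nonempty →
        ∃ δ > 0, ∀ c : ℝ, |c - c₀| < δ → ({x | x ∈ F ∧ X x = c • Y x} ∩ V).Nonempty)}
      ∈ residual ℝ := by
  set G : Set (ℝ × M) := {p | p.2 ∈ F ∧ X p.2 = p.1 • Y p.2}
  have hGF : G ⊆ univ ×ˢ F := fun p hp => ⟨trivial, hp.1⟩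
  have hG : IsClosed G :=
    (hF.isClosed.preimage continuous_snd).inter (isClosed_setOf_eq_smul hX hY)
  obtain ⟨𝒦, h𝒦, hnet⟩ := hF.exists_countable_isCompactNetworkOn I
  filter_upwards [residual_lowerSemicontinuous_preimage_prodMk hG hGF h𝒦 hnet] with c₀ hlsc
  refine ⟨fun V hV hsub => exists_pos_forall_abs_sub_lt_of_eventually_nhds
    (eventually_preimage_prodMk_subset hG hF hGF hV hsub), fun V hV hne => ?_⟩
  rw [inter_comm] at hne
  exact exists_pos_forall_abs_sub_lt_of_eventually_nhds (hlsc V hV hne)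
end

section
/- Let M be a Hausdorff topological space and φ : ℝ × M → M a continuous flow. Let U ⊆ M be open and let (K_c)_{c∈ℝ} be a family of closed φ-invariant subsets of M such that K_c ∩ K_{c'} ∩ U = ∅ whenever c ≠ c'. Let c₀ ∈ ℝ and suppose there is a nonempty set γ ⊆ K_{c₀} ∩ U admitting an attracting neighbourhood inside U, i.e. an open set 𝒰 with γ ⊆ 𝒰 ⊆ U such that for every x ∈ 𝒰 the ω-limit set of x under φ equals γ. Then K_c ∩ 𝒰 = ∅ for every c ≠ c₀; in particular the set-valued map c ↦ K_c is not lower semi-continuous at c₀. -/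
open Set Filter

/-- **No sinks/sources.** Let `φ` be a continuous flow on a Hausdorff space `M`, `U` an
open set, and `(K c)` a family of closed invariant sets, pairwise disjoint inside `U`.
If some nonempty `γ ⊆ K c₀ ∩ U` admits an attracting neighbourhood `𝒰 ⊆ U` (every
point of `𝒰` has ω-limit set equal to `γ`), then `K c ∩ 𝒰 = ∅` for every `c ≠ c₀`;
in particular `c ↦ K c` is not lower semi-continuous at `c₀`. -/
theorem no_sinks_sources
    {M : Type*} [TopologicalSpace M] [T2Space M]
    (φ : ℝ × M → M) (hφ : Continuous φ)
    (hφ0 : ∀ x : M, φ (0, x) = x)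
    (hφadd : ∀ (s t : ℝ) (x : M), φ (t + s, x) = φ (t, φ (s, x)))
    (U : Set M) (hU : IsOpen U)
    (K : ℝ → Set M)
    (hKcl : ∀ c : ℝ, IsClosed (K c))
    (hKinv : ∀ c : ℝ, ∀ x ∈ K c, ∀ t : ℝ, φ (t, x) ∈ K c)
    (hKdisj : ∀ c c' : ℝ, c ≠ c' → K c ∩ K c' ∩ U = ∅)
    (c₀ : ℝ) (γ : Set M) (hγne : γ.Nonempty) (hγ : γ ⊆ K c₀ ∩ U)
    (𝒰 : Set M) (h𝒰 : IsOpen 𝒰) (hγ𝒰 : γ ⊆ 𝒰) (h𝒰U : 𝒰 ⊆ U)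
    (hattr : ∀ x ∈ 𝒰, (⋂ T : ℝ, closure {y : M | ∃ t : ℝ, T ≤ t ∧ y = φ (t, x)}) = γ) :
    (∀ c : ℝ, c ≠ c₀ → K c ∩ 𝒰 = ∅) ∧
    ¬ (∀ V : Set M, IsOpen V → (V ∩ K c₀).Nonempty →
        ∃ δ > 0, ∀ c : ℝ, |c - c₀| < δ → (K c ∩ V).Nonempty) := by
  have main : ∀ c : ℝ, c ≠ c₀ → K c ∩ 𝒰 = ∅ := by
    intro c hc
    by_contra h
    obtain ⟨x, hxK, hx𝒰⟩ := Set.nonempty_iff_ne_empty.2 h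
    -- ω-limit set of x is γ, and it is contained in K c
    have hω := hattr x hx𝒰
    have hsub : γ ⊆ K c := by
      rw [← hω]
      intro y hy
      have hy0 : y ∈ closure {y : M | ∃ t : ℝ, (0:ℝ) ≤ t ∧ y = φ (t, x)} :=
        Set.mem_iInter.1 hy 0
      have hcl : closure {y : M | ∃ t : ℝ, (0:ℝ) ≤ t ∧ y = φ (t, x)} ⊆ K c := by
        apply closure_minimal _ (hKcl c)
        rintro z ⟨t, -, rfl⟩
        exact hKinv c x hxK t
      exact hcl hy0
    obtain ⟨y, hyγ⟩ := hγne
    have : y ∈ K c ∩ K c₀ ∩ U := ⟨⟨hsub hyγ, (hγ hyγ).1⟩, (hγ hyγ).2⟩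
    rw [hKdisj c c₀ hc] at this
    exact this
  refine ⟨main, fun h => ?_⟩
  obtain ⟨y, hyγ⟩ := hγne
  obtain ⟨δ, hδ, hδ'⟩ := h 𝒰 h𝒰 ⟨y, hγ𝒰 hyγ, (hγ hyγ).1⟩
  have hne : (K (c₀ + δ/2) ∩ 𝒰).Nonempty := by
    apply hδ'
    rw [add_sub_cancel_left, abs_of_pos (by linarith)]
    linarith
  rw [main (c₀ + δ/2) (by intro h'; nlinarith [add_eq_left.mp h'])] at hne
  exact hne.ne_empty rfl
end

section
/- Let Σ₁ ⊆ ℝ² be open, z₁ ∈ Σ₁, z₂ ∈ ℝ², and let P : Σ₁ → ℝ² be differentiable at z₁ with P(z₁) = z₂. Let α₁, α₂ : (−1,1) → ℝ² be curves differentiable at 0 with α₁(0) = z₁, α₂(0) = z₂ and α₂′(0) ≠ 0. Suppose there are sequences (s_n), (t_n) of nonzero real numbers with s_n → 0, t_n → 0, α₁(s_n) ≠ z₁ for all n, and P(α₁(s_n)) = α₂(t_n) for all n. Then the derivative DP(z₁) maps α₁′(0) into the line ℝ·α₂′(0), i.e. DP(z₁)(α₁′(0)) is a real scalar multiple of α₂′(0).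 -/
open Filter Topology

/-!
Compose `P` with `α₁`: the curve `P ∘ α₁` has velocity `DP(z₁) α₁′(0)` at `0`, and along the
sequences its difference quotients are `(t n / s n) • slope α₂ 0 (t n)`, multiples of difference
quotients of `α₂` that converge to `α₂′(0) ≠ 0`. Testing against a continuous functional `φ`
with `φ (α₂′(0)) = 1` shows that the ratios `t n / s n` converge, so the limit is a multiple
of `α₂′(0)`.
-/

theorem exists_eq_smul_of_tendsto_smul {𝕜 E ι : Type*} [Field 𝕜] [TopologicalSpace 𝕜]
    [IsTopologicalDivisionRing 𝕜] [T1Space 𝕜] [AddCommGroup E] [TopologicalSpace E] [Module 𝕜 E]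
    [ContinuousSMul 𝕜 E] [T2Space E] [SeparatingDual 𝕜 E]
    {l : Filter ι} [l.NeBot] {c : ι → 𝕜} {w : ι → E} {a b : E}
    (hw : Tendsto w l (𝓝 b)) (hb : b ≠ 0) (hcw : Tendsto (fun i ↦ c i • w i) l (𝓝 a)) :
    ∃ r : 𝕜, a = r • b := by
  obtain ⟨φ, hφb⟩ := SeparatingDual.exists_eq_one (R := 𝕜) hb
  have hφw : Tendsto (fun i ↦ φ (w i)) l (𝓝 1) := hφb ▸ (φ.continuous.tendsto b).comp hw
  have hc : Tendsto c l (𝓝 (φ a)) := by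
    have hquot := ((φ.continuous.tendsto a).comp hcw).div hφw one_ne_zero
    rw [div_one] at hquot
    refine hquot.congr' ?_
    filter_upwards [hφw.eventually_ne one_ne_zero] with i hi
    rw [Pi.div_apply, Function.comp_apply, map_smul, smul_eq_mul, mul_div_cancel_right₀ _ hi]
  exact ⟨φ a, tendsto_nhds_unique hcw (hc.smul hw)⟩

section Curves

variable {𝕜 E ι : Type*} [NontriviallyNormedField 𝕜] [NormedAddCommGroup E] [NormedSpace 𝕜 E]

theorem HasDerivAt.tendsto_slope_comp {f : 𝕜 → E} {f' : E} {x : 𝕜} (hf : HasDerivAt f f' x)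
    {l : Filter ι} {u : ι → 𝕜} (hu : Tendsto u l (𝓝 x)) (hux : ∀ᶠ i in l, u i ≠ x) :
    Tendsto (fun i ↦ slope f x (u i)) l (𝓝 f') :=
  (hasDerivAt_iff_tendsto_slope.mp hf).comp (tendsto_nhdsWithin_iff.mpr ⟨hu, hux⟩)

theorem slope_eq_smul_slope_of_eq {f g : 𝕜 → E} {x y a b : 𝕜} (hb : b ≠ y) (hfg : f x = g y)
    (hab : f a = g b) : slope f x a = ((b - y) / (a - x)) • slope g y b := by
  rw [slope_def_module, slope_def_module, smul_smul, hab, hfg]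
  congr 1
  field_simp [sub_ne_zero.mpr hb]

theorem HasDerivAt.exists_eq_smul_of_comp_eq [SeparatingDual 𝕜 E] {f g : 𝕜 → E} {f' g' : E}
    {x y : 𝕜} (hf : HasDerivAt f f' x) (hg : HasDerivAt g g' y) (hg' : g' ≠ 0) (hfg : f x = g y)
    {l : Filter ι} [l.NeBot] {s t : ι → 𝕜} (hs : Tendsto s l (𝓝 x)) (ht : Tendsto t l (𝓝 y))
    (hsx : ∀ i, s i ≠ x) (hty : ∀ i, t i ≠ y) (hst : ∀ i, f (s i) = g (t i)) :
    ∃ r : 𝕜, f' = r • g' := by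
  have hslope_f := hf.tendsto_slope_comp hs (Eventually.of_forall hsx)
  have hslope_g := hg.tendsto_slope_comp ht (Eventually.of_forall hty)
  refine exists_eq_smul_of_tendsto_smul (c := fun i ↦ (t i - y) / (s i - x)) hslope_g hg' ?_
  exact hslope_f.congr fun i ↦ slope_eq_smul_slope_of_eq (hty i) hfg (hst i)

end Curves

theorem holonomy_derivative_maps_tangent_line_general
    (z₁ z₂ : ℝ × ℝ)
    (P : ℝ × ℝ → ℝ × ℝ) (P' : (ℝ × ℝ) →L[ℝ] ℝ × ℝ)
    (hP : HasFDerivAt P P' z₁) (hPz : P z₁ = z₂)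
    (α₁ α₂ : ℝ → ℝ × ℝ) (v₁ v₂ : ℝ × ℝ)
    (hα₁ : HasDerivAt α₁ v₁ 0) (hα₂ : HasDerivAt α₂ v₂ 0)
    (hα₁0 : α₁ 0 = z₁) (hα₂0 : α₂ 0 = z₂) (hv₂ : v₂ ≠ 0)
    (s t : ℕ → ℝ)
    (hs0 : ∀ n, s n ≠ 0) (ht0 : ∀ n, t n ≠ 0)
    (hs : Tendsto s atTop (nhds 0)) (ht : Tendsto t atTop (nhds 0))
    (hPα : ∀ n, P (α₁ (s n)) = α₂ (t n)) :
    ∃ r : ℝ, P' v₁ = r • v₂ := by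
  subst hα₁0 hPz
  exact (hP.comp_hasDerivAt 0 hα₁).exists_eq_smul_of_comp_eq hα₂ hv₂ hα₂0.symm hs ht hs0 ht0 hPα

/-- **Invariant subspaces for derivatives of holonomy maps, item 1.**
If `P` is differentiable at `z₁` with `P z₁ = z₂`, `α₁, α₂` are curves through `z₁, z₂`
differentiable at `0` with `α₂′(0) ≠ 0`, and there are sequences of nonzero parameters
`s n → 0`, `t n → 0` with `α₁ (s n) ≠ z₁` and `P (α₁ (s n)) = α₂ (t n)` for all `n`,
then `DP(z₁)` sends `α₁′(0)` into the line `ℝ • α₂′(0)`. -/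
theorem holonomy_derivative_maps_tangent_line
    (S₁ : Set (ℝ × ℝ)) (hS₁ : IsOpen S₁)
    (z₁ z₂ : ℝ × ℝ) (hz₁ : z₁ ∈ S₁)
    (P : ℝ × ℝ → ℝ × ℝ) (P' : (ℝ × ℝ) →L[ℝ] ℝ × ℝ)
    (hP : HasFDerivAt P P' z₁) (hPz : P z₁ = z₂)
    (α₁ α₂ : ℝ → ℝ × ℝ) (v₁ v₂ : ℝ × ℝ)
    (hα₁ : HasDerivAt α₁ v₁ 0) (hα₂ : HasDerivAt α₂ v₂ 0)
    (hα₁0 : α₁ 0 = z₁) (hα₂0 : α₂ 0 = z₂) (hv₂ : v₂ ≠ 0)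
    (hα₁S : ∀ s ∈ Set.Ioo (-1 : ℝ) 1, α₁ s ∈ S₁)
    (s t : ℕ → ℝ)
    (hs0 : ∀ n, s n ≠ 0) (ht0 : ∀ n, t n ≠ 0)
    (hsI : ∀ n, s n ∈ Set.Ioo (-1 : ℝ) 1) (htI : ∀ n, t n ∈ Set.Ioo (-1 : ℝ) 1)
    (hs : Tendsto s atTop (nhds 0)) (ht : Tendsto t atTop (nhds 0))
    (hne : ∀ n, α₁ (s n) ≠ z₁)
    (hPα : ∀ n, P (α₁ (s n)) = α₂ (t n)) :
    ∃ r : ℝ, P' v₁ = r • v₂ :=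
  holonomy_derivative_maps_tangent_line_general z₁ z₂ P P' hP hPz α₁ α₂ v₁ v₂ hα₁ hα₂ hα₁0 hα₂0 hv₂
    s t hs0 ht0 hs ht hPα
end

section
/- Let Σ ⊆ ℝ² be open, z ∈ Σ, and let α : (−1,1) → Σ be a curve differentiable at 0 with α(0) = z and α′(0) ≠ 0. Let (t_n) be a sequence of nonzero real numbers with t_n → 0, and set x_n = α(t_n); assume x_n ≠ z for all n. If P : Σ → ℝ² is differentiable at z, P(z) = z, and P(x_n) = x_n for every n, then DP(z)(α′(0)) = α′(0), i.e. DP(z) is the identity on the line ℝ·α′(0). -/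
open Set Filter

/-- **Invariant subspaces for derivatives of holonomy maps, item 3.**
Given a curve `α` through `z` differentiable at `0` with `α′(0) ≠ 0` and a sequence of
nonzero parameters `t n → 0` with `x n = α (t n) ≠ z`, if `P` is differentiable at `z`,
fixes `z` and fixes every `x n`, then `DP(z)` is the identity on the line `ℝ • α′(0)`. -/
theorem derivative_identity_on_fixed_curve
    (S : Set (ℝ × ℝ)) (hS : IsOpen S) (z : ℝ × ℝ) (hz : z ∈ S)
    (α : ℝ → ℝ × ℝ) (v : ℝ × ℝ)
    (hα : HasDerivAt α v 0) (hα0 : α 0 = z) (hv : v ≠ 0)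
    (hαS : ∀ s ∈ Set.Ioo (-1 : ℝ) 1, α s ∈ S)
    (t : ℕ → ℝ) (ht0 : ∀ n, t n ≠ 0) (htI : ∀ n, t n ∈ Set.Ioo (-1 : ℝ) 1)
    (ht : Tendsto t atTop (nhds 0))
    (hne : ∀ n, α (t n) ≠ z)
    (P : ℝ × ℝ → ℝ × ℝ) (P' : (ℝ × ℝ) →L[ℝ] ℝ × ℝ)
    (hP : HasFDerivAt P P' z) (hPz : P z = z)
    (hfix : ∀ n, P (α (t n)) = α (t n)) :
    P' v = v := by
  have hcomp : HasDerivAt (P ∘ α) (P' v) 0 := by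
    have hP2 : HasFDerivAt P P' (α 0) := hα0 ▸ hP
    exact hP2.comp_hasDerivAt 0 hα
  have htn : Tendsto t atTop (nhdsWithin 0 {(0 : ℝ)}ᶜ) := by
    rw [tendsto_nhdsWithin_iff]
    exact ⟨ht, Filter.Eventually.of_forall fun n => ht0 n⟩
  have h1 : Tendsto (fun n => slope α 0 (t n)) atTop (nhds v) :=
    (hasDerivAt_iff_tendsto_slope.mp hα).comp htn
  have h2 : Tendsto (fun n => slope (P ∘ α) 0 (t n)) atTop (nhds (P' v)) :=
    (hasDerivAt_iff_tendsto_slope.mp hcomp).comp htn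
  have heq : (fun n => slope (P ∘ α) 0 (t n)) = fun n => slope α 0 (t n) := by
    funext n
    simp [slope, Function.comp, hfix n, hα0, hPz]
  rw [heq] at h2
  exact tendsto_nhds_unique h2 h1
end

section
/- Let E be a finite-dimensional real normed vector space and let X, Y : E → E be C¹ vector fields whose Lie bracket vanishes identically: DY(x)·X(x) − DX(x)·Y(x) = 0 for every x ∈ E. Let γ : ℝ → E be an integral curve of Y, i.e. γ′(t) = Y(γ(t)) for every t ∈ ℝ, and let c ∈ ℝ be such that X(γ(0)) = c · Y(γ(0)). Then X(γ(t)) = c · Y(γ(t)) for every t ∈ ℝ. -/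
open Set

/-!
Along an integral curve `γ` of `Y`, the commutation `[X, Y] = 0` says that
`d/dt X(γ t) = DX(γ t) (Y (γ t)) = DY(γ t) (X (γ t))`, so `f t := X (γ t) - c • Y (γ t)` solves
the linear equation `f' t = DY(γ t) (f t)`. Its coefficient is continuous, hence bounded on
compact intervals, so uniqueness for Lipschitz ODEs forces `f = 0` once `f 0 = 0`.
-/

section LinearODE

variable {E : Type*} [NormedAddCommGroup E] [NormedSpace ℝ E]

theorem eq_zero_of_hasDerivAt_clm_apply_of_continuous {A : ℝ → E →L[ℝ] E} (hA : Continuous A)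
    {f : ℝ → E} (hf : ∀ t, HasDerivAt f (A t (f t)) t) {t₀ : ℝ} (h₀ : f t₀ = 0) : f = 0 := by
  ext t
  set a := min t t₀ - 1
  set b := max t t₀ + 1
  have ht : t ∈ Ioo a b := ⟨by grind, by grind⟩
  have ht₀ : t₀ ∈ Ioo a b := ⟨by grind, by grind⟩
  obtain ⟨K, hK⟩ : BddAbove ((fun s ↦ ‖A s‖₊) '' Icc a b) :=
    (isCompact_Icc.image (continuous_nnnorm.comp hA)).bddAbove
  have hlip : ∀ s ∈ Ioo a b, LipschitzOnWith K (A s) univ := fun s hs ↦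
    ((A s).lipschitz.weaken (hK ⟨s, Ioo_subset_Icc_self hs, rfl⟩)).lipschitzOnWith
  have hzero : ∀ s, HasDerivAt (0 : ℝ → E) (A s 0) s := fun s ↦ by simp
  exact ODE_solution_unique_of_mem_Ioo hlip ht₀ (fun s _ ↦ ⟨hf s, trivial⟩)
    (fun s _ ↦ ⟨hzero s, trivial⟩) h₀ ht

end LinearODE

section LieBracket

variable {𝕜 : Type*} [NontriviallyNormedField 𝕜] {E : Type*} [NormedAddCommGroup E]
  [NormedSpace 𝕜 E]

theorem hasDerivAt_sub_smul_comp_of_lieBracket_eq_zero {X Y : E → E} {γ : 𝕜 → E} {t : 𝕜}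
    (hX : DifferentiableAt 𝕜 X (γ t)) (hY : DifferentiableAt 𝕜 Y (γ t))
    (hXY : VectorField.lieBracket 𝕜 X Y (γ t) = 0) (hγ : HasDerivAt γ (Y (γ t)) t) (c : 𝕜) :
    HasDerivAt (fun s ↦ X (γ s) - c • Y (γ s))
      (fderiv 𝕜 Y (γ t) (X (γ t) - c • Y (γ t))) t := by
  rw [VectorField.lieBracket, sub_eq_zero] at hXY
  have hXγ := hX.hasFDerivAt.comp_hasDerivAt t hγ
  have hYγ := hY.hasFDerivAt.comp_hasDerivAt t hγ
  refine (hXγ.sub (hYγ.const_smul c)).congr_deriv ?_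
  rw [map_sub, map_smul, hXY]

end LieBracket

theorem collinearity_invariant_along_integral_curve_general
    {E : Type*} [NormedAddCommGroup E] [NormedSpace ℝ E]
    (X Y : E → E) (hX : ContDiff ℝ 1 X) (hY : ContDiff ℝ 1 Y)
    (hcomm : ∀ x : E, fderiv ℝ Y x (X x) - fderiv ℝ X x (Y x) = 0)
    (γ : ℝ → E) (hγ : ∀ t : ℝ, HasDerivAt γ (Y (γ t)) t)
    (c : ℝ) (h0 : X (γ 0) = c • Y (γ 0)) :
    ∀ t : ℝ, X (γ t) = c • Y (γ t) := by
  have hγ_cont : Continuous γ := continuous_iff_continuousAt.mpr fun t ↦ (hγ t).continuousAt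
  have hf : (fun s ↦ X (γ s) - c • Y (γ s)) = 0 :=
    eq_zero_of_hasDerivAt_clm_apply_of_continuous ((hY.continuous_fderiv one_ne_zero).comp hγ_cont)
      (fun t ↦ hasDerivAt_sub_smul_comp_of_lieBracket_eq_zero
        (hX.differentiable one_ne_zero _) (hY.differentiable one_ne_zero _) (hcomm _) (hγ t) c)
      (sub_eq_zero.mpr h0)
  exact fun t ↦ sub_eq_zero.mp (congrFun hf t)

/-- If `X` and `Y` are commuting `C¹` vector fields on a finite-dimensional real normed
space (`[X,Y] = 0`), `γ` is an integral curve of `Y`, and `X = c • Y` at `γ 0`, then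
`X = c • Y` all along `γ`: the collinearity locus `Zero (X - c Y)` is invariant under
the flow of `Y`. -/
theorem collinearity_invariant_along_integral_curve
    {E : Type*} [NormedAddCommGroup E] [NormedSpace ℝ E] [FiniteDimensional ℝ E]
    (X Y : E → E) (hX : ContDiff ℝ 1 X) (hY : ContDiff ℝ 1 Y)
    (hcomm : ∀ x : E, fderiv ℝ Y x (X x) - fderiv ℝ X x (Y x) = 0)
    (γ : ℝ → E) (hγ : ∀ t : ℝ, HasDerivAt γ (Y (γ t)) t)
    (c : ℝ) (h0 : X (γ 0) = c • Y (γ 0)) :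
    ∀ t : ℝ, X (γ t) = c • Y (γ t) :=
  collinearity_invariant_along_integral_curve_general X Y hX hY hcomm γ hγ c h0
end

section
/- Let E be a nonempty complete real normed vector space, let n ≥ 1 be a natural number, and let f : ℝ × E → E be a C^n map. Suppose there exists k ∈ [0,1) such that for every c ∈ ℝ the map x ↦ f(c,x) is Lipschitz with constant k. Then there is a C^n map g : ℝ → E such that for every c ∈ ℝ, g(c) is the unique fixed point of x ↦ f(c,x), i.e. f(c, g(c)) = g(c) and any x with f(c,x) = x equals g(c). -/
/-!
Fixed points of `f (c, ·)` are the zeros of `F (c, x) = x - f (c, x)`. The partial derivative of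
`F` in `x` is `1 - ∂ₓf`, and `‖∂ₓf‖ ≤ k < 1` by the Lipschitz bound, so it is invertible by the
Neumann series. The `Cⁿ` implicit function theorem then gives, near each parameter `c₀`, a `Cⁿ`
zero of `F (c, ·)`, which by uniqueness of fixed points is the fixed point of the contraction.
-/

open Filter Topology

theorem ContinuousLinearMap.isInvertible_one_sub_of_norm_lt_one {𝕜 E : Type*}
    [NontriviallyNormedField 𝕜] [NormedAddCommGroup E] [NormedSpace 𝕜 E] [CompleteSpace E]
    {T : E →L[𝕜] E} (hT : ‖T‖ < 1) : (1 - T).IsInvertible :=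
  ⟨ContinuousLinearEquiv.unitsEquiv 𝕜 E (Units.oneSub T hT), rfl⟩

theorem norm_fderiv_comp_inr_le_of_lipschitzWith {𝕜 E₁ E₂ F : Type*}
    [NontriviallyNormedField 𝕜] [NormedAddCommGroup E₁] [NormedSpace 𝕜 E₁]
    [NormedAddCommGroup E₂] [NormedSpace 𝕜 E₂] [NormedAddCommGroup F] [NormedSpace 𝕜 F]
    {f : E₁ × E₂ → F} {p : E₁ × E₂} {k : NNReal} (hf : DifferentiableAt 𝕜 f p)
    (hlip : LipschitzWith k fun x => f (p.1, x)) :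
    ‖fderiv 𝕜 f p ∘L .inr 𝕜 E₁ E₂‖ ≤ k :=
  (hf.hasFDerivAt.comp p.2 (hasFDerivAt_prodMk_right p.1 p.2)).le_of_lipschitz hlip

theorem contDiffAt_of_unique_fixedPoint {𝕜 E₁ E₂ : Type*} [RCLike 𝕜]
    [NormedAddCommGroup E₁] [NormedSpace 𝕜 E₁] [CompleteSpace E₁]
    [NormedAddCommGroup E₂] [NormedSpace 𝕜 E₂] [CompleteSpace E₂]
    {f : E₁ × E₂ → E₂} {g : E₁ → E₂} {c₀ : E₁} {n : WithTop ℕ∞}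
    (hf : ContDiffAt 𝕜 n f (c₀, g c₀)) (hn : n ≠ 0)
    (hf₂ : ‖fderiv 𝕜 f (c₀, g c₀) ∘L .inr 𝕜 E₁ E₂‖ < 1)
    (hfix : Function.IsFixedPt (fun x => f (c₀, x)) (g c₀))
    (huniq : ∀ᶠ c in 𝓝 c₀, ∀ x, Function.IsFixedPt (fun x => f (c, x)) x → x = g c) :
    ContDiffAt 𝕜 n g c₀ := by
  set u : E₁ × E₂ := (c₀, g c₀)
  set F : E₁ × E₂ → E₂ := fun p => p.2 - f p
  have hF : ContDiffAt 𝕜 n F u := contDiffAt_snd.sub hf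
  have hF₂ : fderiv 𝕜 F u ∘L .inr 𝕜 E₁ E₂ = 1 - fderiv 𝕜 f u ∘L .inr 𝕜 E₁ E₂ := by
    have hF' : HasFDerivAt F (.snd 𝕜 E₁ E₂ - fderiv 𝕜 f u) u :=
      hasFDerivAt_snd.sub (hf.differentiableAt hn).hasFDerivAt
    rw [hF'.fderiv]
    ext x; simp
  have hinv : (fderiv 𝕜 F u ∘L .inr 𝕜 E₁ E₂).IsInvertible := by
    rw [hF₂]; exact ContinuousLinearMap.isInvertible_one_sub_of_norm_lt_one hf₂
  have hFu : F u = 0 := sub_eq_zero.2 hfix.symm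
  refine (hF.contDiffAt_implicitFunction hn hinv).congr_of_eventuallyEq ?_
  filter_upwards [hF.eventually_apply_implicitFunction hn hinv, huniq] with c hc hcu
  exact (hcu _ (sub_eq_zero.1 (hc.trans hFu)).symm).symm

/-- A `Cⁿ` (`n ≥ 1`) one-parameter family of uniformly contracting maps of a nonempty
complete real normed vector space has a unique fixed point depending `Cⁿ` on the
parameter. -/
theorem fixed_point_of_contracting_family_smooth
    {E : Type*} [NormedAddCommGroup E] [NormedSpace ℝ E] [CompleteSpace E] [Nonempty E]
    (n : ℕ) (hn : 1 ≤ n)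
    (f : ℝ × E → E) (hf : ContDiff ℝ n f)
    (k : NNReal) (hk : k < 1)
    (hlip : ∀ c : ℝ, LipschitzWith k fun x : E => f (c, x)) :
    ∃ g : ℝ → E, ContDiff ℝ n g ∧
      ∀ c : ℝ, f (c, g c) = g c ∧ ∀ x : E, f (c, x) = x → x = g c := by
  have hcontr (c : ℝ) : ContractingWith k fun x => f (c, x) := ⟨hk, hlip c⟩
  have hfix (c : ℝ) := (hcontr c).fixedPoint_isFixedPt
  have huniq (c : ℝ) (x : E) (hx : f (c, x) = x) := (hcontr c).fixedPoint_unique hx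
  refine ⟨fun c => (hcontr c).fixedPoint, contDiff_iff_contDiffAt.2 fun c₀ => ?_,
    fun c => ⟨hfix c, huniq c⟩⟩
  have hn₀ : (n : WithTop ℕ∞) ≠ 0 := by exact_mod_cast (by omega : n ≠ 0)
  refine contDiffAt_of_unique_fixedPoint hf.contDiffAt hn₀ ?_ (hfix c₀) (.of_forall huniq)
  exact (norm_fderiv_comp_inr_le_of_lipschitzWith
    (hf.differentiable hn₀ _) (hlip c₀)).trans_lt hk
end

section
/- Let M be a metric space and φ : ℝ × M → M a continuous flow. Let (K_c)_{c∈ℝ} be a family of compact φ-invariant subsets of M and let c₀ ∈ ℝ. Assume the set-valued map Z : c ↦ K_c is both upper semi-continuous and lower semi-continuous at c₀. Let 𝒰 ⊆ M be an open set with K_{c₀} ∩ 𝒰 ≠ ∅ and K_{c₀} ∩ ∂𝒰 = ∅, where ∂𝒰 denotes the topological frontier of 𝒰. Then there exists δ > 0 such that for every c with |c − c₀| < δ: (1) K_c ∩ 𝒰 ≠ ∅; and (2) for every x ∈ K_c ∩ 𝒰 and every t ∈ ℝ, φ(t,x) ∈ 𝒰. -/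
open Set Filter

/-- **Confined orbits near a continuity parameter.** Let `φ` be a continuous flow on a
metric space `M` and `(K c)` a family of compact invariant sets such that `c ↦ K c` is
both upper and lower semi-continuous at `c₀`. If `𝒰` is open, meets `K c₀` and
`K c₀` does not meet the frontier of `𝒰`, then for all `c` close enough to `c₀`:
`K c` meets `𝒰`, and the full orbit of every point of `K c ∩ 𝒰` stays in `𝒰`. -/
theorem confined_orbits_near_continuity_point
    {M : Type*} [MetricSpace M]
    (φ : ℝ × M → M) (hφ : Continuous φ)
    (hφ0 : ∀ x : M, φ (0, x) = x)
    (hφadd : ∀ (s t : ℝ) (x : M), φ (t + s, x) = φ (t, φ (s, x)))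
    (K : ℝ → Set M)
    (hKc : ∀ c : ℝ, IsCompact (K c))
    (hKinv : ∀ c : ℝ, ∀ x ∈ K c, ∀ t : ℝ, φ (t, x) ∈ K c)
    (c₀ : ℝ)
    (husc : ∀ V : Set M, IsOpen V → K c₀ ⊆ V →
      ∃ δ > 0, ∀ c : ℝ, |c - c₀| < δ → K c ⊆ V)
    (hlsc : ∀ V : Set M, IsOpen V → (V ∩ K c₀).Nonempty →
      ∃ δ > 0, ∀ c : ℝ, |c - c₀| < δ → (K c ∩ V).Nonempty)
    (𝒰 : Set M) (h𝒰 : IsOpen 𝒰)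
    (hne : (K c₀ ∩ 𝒰).Nonempty) (hfr : K c₀ ∩ frontier 𝒰 = ∅) :
    ∃ δ > 0, ∀ c : ℝ, |c - c₀| < δ →
      (K c ∩ 𝒰).Nonempty ∧ ∀ x ∈ K c ∩ 𝒰, ∀ t : ℝ, φ (t, x) ∈ 𝒰 := by
  set V : Set M := 𝒰 ∪ (closure 𝒰)ᶜ with hV
  have hVopen : IsOpen V := h𝒰.union isClosed_closure.isOpen_compl
  have hKV : K c₀ ⊆ V := by
    intro x hx
    by_cases hcl : x ∈ closure 𝒰
    · left
      by_contra hxU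
      have : x ∈ frontier 𝒰 := ⟨hcl, by rwa [h𝒰.interior_eq]⟩
      exact absurd hfr (by simp [Set.eq_empty_iff_forall_notMem]; exact ⟨x, hx, this⟩)
    · exact Or.inr hcl
  obtain ⟨δ₁, hδ₁, h₁⟩ := husc V hVopen hKV
  obtain ⟨δ₂, hδ₂, h₂⟩ := hlsc 𝒰 h𝒰 ⟨hne.choose, hne.choose_spec.2, hne.choose_spec.1⟩
  refine ⟨min δ₁ δ₂, lt_min hδ₁ hδ₂, fun c hc => ?_⟩
  have hc1 : |c - c₀| < δ₁ := lt_of_lt_of_le hc (min_le_left _ _)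
  have hc2 : |c - c₀| < δ₂ := lt_of_lt_of_le hc (min_le_right _ _)
  refine ⟨h₂ c hc2, fun x hx t => ?_⟩
  -- the orbit of x stays in V; use connectedness of ℝ
  have horb : ∀ s : ℝ, φ (s, x) ∈ V := fun s => h₁ c hc1 (hKinv c x hx.1 s)
  set A : Set ℝ := {s | φ (s, x) ∈ 𝒰} with hA
  have hcont : Continuous fun s : ℝ => φ (s, x) := hφ.comp (continuous_id.prodMk continuous_const)
  have hAopen : IsOpen A := h𝒰.preimage hcont
  have hAcomp : Aᶜ = {s | φ (s, x) ∈ (closure 𝒰)ᶜ} := by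
    ext s
    simp only [Set.mem_compl_iff, hA, Set.mem_setOf_eq]
    constructor
    · intro hs
      rcases horb s with h | h
      · exact absurd h hs
      · exact h
    · intro hs hU
      exact hs (subset_closure hU)
  have hAclosed : IsClosed A := by
    rw [← isOpen_compl_iff, hAcomp]
    exact (isClosed_closure.isOpen_compl).preimage hcont
  have h0 : (0 : ℝ) ∈ A := by simp [hA, hφ0 x, hx.2]
  have : A = Set.univ := IsClopen.eq_univ ⟨hAclosed, hAopen⟩ ⟨0, h0⟩
  have := this ▸ Set.mem_univ t
  exact this
end
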